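/- Let n ≥ 1, let k be a field, let σ ⊆ ℝ^{n+1} be the convex cone generated by the vectors (v,1) with v ∈ {0,1}^n, and let S = σ∨ ∩ ℤ^{n+1}, an additive submonoid of ℤ^{n+1}. The k-algebra homomorphism from the polynomial ring k[X_1,Y_1,…,X_n,Y_n] to the monoid algebra k[S] sending X_i to the monomial χ^{e_i} and Y_i to the monomial χ^{e_{n+1}−e_i} (for 1 ≤ i ≤ n) is surjective, and its kernel is the ideal generated by the polynomials X_iY_i − X_jY_j for 1 ≤ i < j ≤ n. Hence k[S] ≅ k[X_1,Y_1,…,X_n,Y_n]/(X_iY_i − X_jY_j : 1 ≤ i < j ≤ n). -/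

import Mathlib

open Finset

/-- The convex cone generated by a set of vectors: all finite nonnegative
linear combinations of elements of `S`. -/
def coneGen {m : ℕ} (S : Set (Fin m → ℝ)) : Set (Fin m → ℝ) :=
  {x | ∃ (k : ℕ) (c : Fin k → ℝ) (v : Fin k → Fin m → ℝ),
    (∀ i, 0 ≤ c i) ∧ (∀ i, v i ∈ S) ∧ x = ∑ i, c i • v i}

/-- The dual cone with respect to the standard inner product. -/
def dualCone {m : ℕ} (σ : Set (Fin m → ℝ)) : Set (Fin m → ℝ) :=
  {u | ∀ x ∈ σ, 0 ≤ ∑ i, u i * x i}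

/-- The vertices `(v,1)` of the unit hypercube, `v ∈ {0,1}^n`, viewed in
`ℝ^{n+1}` with last coordinate `1`. -/
def hcVerts (n : ℕ) : Set (Fin (n + 1) → ℝ) :=
  {x | x (Fin.last n) = 1 ∧ ∀ i, i ≠ Fin.last n → (x i = 0 ∨ x i = 1)}

/-- The `k`-algebra homomorphism from the polynomial ring in the variables
`X_1, Y_1, …, X_n, Y_n` (encoded as `Fin n ⊕ Fin n`) to the monoid algebra of
the lattice `ℤ^{n+1}`, sending `X_i ↦ χ^{e_i}` and `Y_i ↦ χ^{e_{n+1} − e_i}`. -/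
noncomputable def hcHom (n : ℕ) (k : Type) [Field k] :
    MvPolynomial (Fin n ⊕ Fin n) k →ₐ[k] AddMonoidAlgebra k (Fin (n + 1) → ℤ) :=
  MvPolynomial.aeval (Sum.elim
    (fun i : Fin n => AddMonoidAlgebra.single (Pi.single i.castSucc (1 : ℤ)) (1 : k))
    (fun i : Fin n => AddMonoidAlgebra.single
      (Pi.single (Fin.last n) (1 : ℤ) - Pi.single i.castSucc 1) (1 : k)))

/-!
`hcHom` sends the monomial `X^a Y^b` to `χ^w` with `w_i = a_i - b_i` and `w_{n+1} = ∑ b_i`, so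
both claims are statements about this additive weight map. A lattice point `w` lies in `σ∨` iff
its slack `w_{n+1} - ∑ max(-w_i, 0)` is nonnegative, and then it is the weight of the normal form
`X^{w⁺} Y^{w⁻} (X_1 Y_1)^slack`. The kernel is spanned by binomials `X^a Y^b - X^c Y^d` of equal
weight, and modulo the ideal every monomial equals its normal form: it factors as
`X^{w⁺} Y^{w⁻} ∏ (X_i Y_i)^{min(a_i, b_i)}`, and all the `X_i Y_i` agree in the quotient.
-/

open MvPolynomial AddMonoidAlgebra

namespace MvPolynomial

variable {σ R G : Type*} [AddCommMonoid G] {w : (σ →₀ ℕ) → G}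

section CommSemiring

variable [CommSemiring R] {φ : MvPolynomial σ R →ₐ[R] AddMonoidAlgebra R G}

theorem map_eq_sum_single_of_map_monomial (hφ : ∀ d c, φ (monomial d c) = single (w d) c)
    (p : MvPolynomial σ R) : φ p = ∑ d ∈ p.support, single (w d) (coeff d p) := by
  conv_lhs => rw [p.as_sum, map_sum]
  simp only [hφ]

theorem mem_range_iff_of_map_monomial (hφ : ∀ d c, φ (monomial d c) = single (w d) c)
    (f : AddMonoidAlgebra R G) : f ∈ Set.range φ ↔ ∀ g ∈ f.coeff.support, g ∈ Set.range w := by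
  classical
  constructor
  · rintro ⟨p, rfl⟩ g hg
    rw [map_eq_sum_single_of_map_monomial hφ, AddMonoidAlgebra.coeff_sum] at hg
    obtain ⟨d, -, hd⟩ := Finsupp.mem_support_finsetSum g hg
    rw [coeff_single] at hd
    exact ⟨d, (Finset.mem_singleton.mp (Finsupp.support_single_subset hd)).symm⟩
  · intro h
    refine ⟨∑ g ∈ f.coeff.support, monomial (Function.invFun w g) (f.coeff g), ?_⟩
    rw [map_sum]
    simp only [hφ]
    conv_rhs => rw [← f.sum_coeff_single, Finsupp.sum]
    exact Finset.sum_congr rfl fun g hg => by rw [Function.invFun_eq (h g hg)]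

end CommSemiring

theorem ker_le_of_map_monomial [CommRing R] {φ : MvPolynomial σ R →ₐ[R] AddMonoidAlgebra R G}
    (hφ : ∀ d c, φ (monomial d c) = single (w d) c) {I : Ideal (MvPolynomial σ R)}
    (hI : ∀ a b, w a = w b → monomial a 1 - monomial b 1 ∈ I) : RingHom.ker φ ≤ I := by
  intro p hp
  -- `r` picks one exponent in each fibre of `w`; re-indexing `p` along `r ∘ w` kills it.
  set r := Function.invFun w
  have hq : ∑ d ∈ p.support, monomial (r (w d)) (coeff d p) = 0 := by
    have : ∑ d ∈ p.support, monomial (r (w d)) (coeff d p) = mapDomain r (φ p) := by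
      rw [map_eq_sum_single_of_map_monomial hφ,
        ← AddMonoidHom.mk'_apply (mapDomain r) (mapDomain_add r), map_sum]
      simp only [AddMonoidHom.mk'_apply, mapDomain_single, single_eq_monomial]
    rw [this, RingHom.mem_ker.mp hp, mapDomain_zero]
  have hpq : p = ∑ d ∈ p.support, C (coeff d p) * (monomial d 1 - monomial (r (w d)) 1) := by
    simp only [mul_sub, C_mul_monomial, mul_one, Finset.sum_sub_distrib, hq, sub_zero]
    exact p.as_sum
  rw [hpq]
  exact Ideal.sum_mem _ fun d _ =>
    Ideal.mul_mem_left _ _ (hI _ _ (Function.invFun_eq ⟨d, rfl⟩).symm)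

end MvPolynomial

theorem dualCone_coneGen {m : ℕ} (S : Set (Fin m → ℝ)) :
    dualCone (coneGen S) = dualCone S := by
  ext u
  constructor
  · intro hu x hx
    exact hu x ⟨1, fun _ => 1, fun _ => x, fun _ => zero_le_one, fun _ => hx, by simp⟩
  · rintro hu x ⟨K, c, v, hc, hv, rfl⟩
    have h : ∑ i, u i * (∑ j, c j • v j) i = ∑ j, c j * ∑ i, u i * v j i := by
      simp only [Finset.sum_apply, Finset.mul_sum, Pi.smul_apply, smul_eq_mul]
      rw [Finset.sum_comm]
      exact Finset.sum_congr rfl fun j _ => Finset.sum_congr rfl fun i _ => by ring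
    rw [h]
    exact Finset.sum_nonneg fun j _ => mul_nonneg (hc j) (hu (v j) (hv j))

section Hypercube

variable {n : ℕ}

theorem mem_dualCone_hcVerts_iff (u : Fin (n + 1) → ℝ) :
    u ∈ dualCone (hcVerts n) ↔
      ∀ A : Finset (Fin n), 0 ≤ ∑ i ∈ A, u i.castSucc + u (Fin.last n) := by
  classical
  constructor
  · intro hu A
    have hx : Fin.snoc (fun i => if i ∈ A then 1 else 0) 1 ∈ hcVerts n := by
      refine ⟨Fin.snoc_last .., fun i hi => ?_⟩
      obtain ⟨j, rfl⟩ := Fin.exists_castSucc_eq.mpr hi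
      by_cases hj : j ∈ A <;> simp [hj]
    simpa [Fin.sum_univ_castSucc, Finset.sum_ite_mem] using hu _ hx
  · rintro h x ⟨hlast, hx⟩
    have hsum : ∑ i : Fin n, u i.castSucc * x i.castSucc =
        ∑ i : Fin n with x i.castSucc = 1, u i.castSucc := by
      rw [Finset.sum_filter]
      refine Finset.sum_congr rfl fun i _ => ?_
      rcases hx i.castSucc (Fin.castSucc_lt_last i).ne with h0 | h1 <;> simp [*]
    rw [Fin.sum_univ_castSucc, hlast, mul_one, hsum]
    exact h _

def hcGen (n : ℕ) : Fin n ⊕ Fin n → Fin (n + 1) → ℤ :=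
  Sum.elim (fun i => Pi.single i.castSucc 1)
    (fun i => Pi.single (Fin.last n) 1 - Pi.single i.castSucc 1)

noncomputable def hcWeight (n : ℕ) : (Fin n ⊕ Fin n →₀ ℕ) →+ (Fin (n + 1) → ℤ) :=
  (Finsupp.linearCombination ℕ (hcGen n)).toAddMonoidHom

theorem hcWeight_apply (d : Fin n ⊕ Fin n →₀ ℕ) : hcWeight n d = ∑ s, d s • hcGen n s := by
  simp [hcWeight, Finsupp.linearCombination_apply, Finsupp.sum_fintype]

theorem hcWeight_castSucc (d : Fin n ⊕ Fin n →₀ ℕ) (i : Fin n) :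
    hcWeight n d i.castSucc = d (.inl i) - d (.inr i) := by
  simp [hcWeight_apply, Fintype.sum_sum_type, hcGen, Pi.single_apply, (Fin.castSucc_lt_last _).ne,
    sub_eq_add_neg]

theorem hcWeight_last (d : Fin n ⊕ Fin n →₀ ℕ) :
    hcWeight n d (Fin.last n) = ∑ i, (d (.inr i) : ℤ) := by
  simp [hcWeight_apply, Fintype.sum_sum_type, hcGen, (Fin.castSucc_lt_last _).ne]

theorem hcHom_monomial {k : Type} [Field k] (d : Fin n ⊕ Fin n →₀ ℕ) (c : k) :
    hcHom n k (monomial d c) = single (hcWeight n d) c := by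
  have hX (s : Fin n ⊕ Fin n) : hcHom n k (X s) = single (hcGen n s) 1 := by
    cases s <;> simp [hcHom, hcGen]
  rw [monomial_eq, map_mul, map_finsuppProd]
  simp [hX, single_pow, hcWeight, Finsupp.linearCombination_apply]

def hcSlack (w : Fin (n + 1) → ℤ) : ℤ :=
  w (Fin.last n) - ∑ i : Fin n, ((-w i.castSucc).toNat : ℤ)

noncomputable def hcReduced (w : Fin (n + 1) → ℤ) : Fin n ⊕ Fin n →₀ ℕ :=
  Finsupp.equivFunOnFinite.symm
    (Sum.elim (fun i => (w i.castSucc).toNat) (fun i => (-w i.castSucc).toNat))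

noncomputable def hcDiag (i : Fin n) : Fin n ⊕ Fin n →₀ ℕ :=
  Finsupp.single (.inl i) 1 + Finsupp.single (.inr i) 1

noncomputable def hcNormalForm (i₀ : Fin n) (w : Fin (n + 1) → ℤ) : Fin n ⊕ Fin n →₀ ℕ :=
  hcReduced w + (hcSlack w).toNat • hcDiag i₀

theorem hcSlack_nonneg_iff (w : Fin (n + 1) → ℤ) :
    0 ≤ hcSlack w ↔ ∀ A : Finset (Fin n), 0 ≤ ∑ i ∈ A, w i.castSucc + w (Fin.last n) := by
  constructor
  · intro h A
    have hA : ∑ i ∈ A, -((-w i.castSucc).toNat : ℤ) ≤ ∑ i ∈ A, w i.castSucc :=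
      Finset.sum_le_sum fun i _ => by omega
    have hsub :
        ∑ i ∈ A, ((-w i.castSucc).toNat : ℤ) ≤ ∑ i : Fin n, ((-w i.castSucc).toNat : ℤ) :=
      Finset.sum_le_sum_of_subset_of_nonneg (Finset.subset_univ A) fun i _ _ => by positivity
    rw [Finset.sum_neg_distrib] at hA
    rw [hcSlack] at h
    linarith
  · intro h
    have hneg (i : Fin n) :
        ((-w i.castSucc).toNat : ℤ) = -if w i.castSucc < 0 then w i.castSucc else 0 := by
      split <;> omega
    have := h {i | w i.castSucc < 0}
    rw [Finset.sum_filter] at this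
    simp only [hcSlack, hneg, Finset.sum_neg_distrib]
    linarith

theorem hcSlack_hcWeight (d : Fin n ⊕ Fin n →₀ ℕ) :
    hcSlack (hcWeight n d) = ∑ i, (min (d (.inl i)) (d (.inr i)) : ℤ) := by
  rw [hcSlack, hcWeight_last, ← Finset.sum_sub_distrib]
  refine Finset.sum_congr rfl fun i _ => ?_
  rw [hcWeight_castSucc]
  omega

theorem hcWeight_hcDiag (i : Fin n) : hcWeight n (hcDiag i) = Pi.single (Fin.last n) 1 := by
  simp [hcDiag, hcWeight, hcGen]

theorem hcWeight_hcNormalForm (i₀ : Fin n) {w : Fin (n + 1) → ℤ} (hw : 0 ≤ hcSlack w) :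
    hcWeight n (hcNormalForm i₀ w) = w := by
  funext j
  cases j using Fin.lastCases with
  | last =>
    rw [hcSlack] at hw
    simp [hcNormalForm, hcReduced, hcDiag, hcWeight_last, Finsupp.single_apply,
      Finset.sum_add_distrib, hcSlack] at hw ⊢
    omega
  | cast i =>
    simp [hcNormalForm, hcReduced, hcDiag, hcWeight_castSucc, Finsupp.single_apply]

theorem hcReduced_hcWeight_add_sum (d : Fin n ⊕ Fin n →₀ ℕ) :
    hcReduced (hcWeight n d) + ∑ i, min (d (.inl i)) (d (.inr i)) • hcDiag i = d := by
  ext (i | i) <;> simp [hcReduced, hcDiag, hcWeight_castSucc, Finsupp.single_apply]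
  omega

theorem mem_range_hcWeight_iff (i₀ : Fin n) (w : Fin (n + 1) → ℤ) :
    w ∈ Set.range (hcWeight n) ↔ 0 ≤ hcSlack w := by
  constructor
  · rintro ⟨d, rfl⟩
    rw [hcSlack_hcWeight]
    positivity
  · exact fun hw => ⟨hcNormalForm i₀ w, hcWeight_hcNormalForm i₀ hw⟩

section Ideal

variable {R : Type*} [CommRing R]

variable (n R) in
noncomputable def hcIdeal : Ideal (MvPolynomial (Fin n ⊕ Fin n) R) :=
  Ideal.span {p | ∃ i j : Fin n, i < j ∧
    p = X (Sum.inl i) * X (Sum.inr i) - X (Sum.inl j) * X (Sum.inr j)}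

theorem X_mul_X_sub_X_mul_X_mem_hcIdeal (i j : Fin n) :
    X (.inl i) * X (.inr i) - X (.inl j) * X (.inr j) ∈ hcIdeal n R := by
  rcases lt_trichotomy i j with h | rfl | h
  · exact Ideal.subset_span ⟨i, j, h, rfl⟩
  · rw [sub_self]
    exact zero_mem _
  · rw [← neg_sub]
    exact neg_mem (Ideal.subset_span ⟨j, i, h, rfl⟩)

theorem monomial_hcDiag (i : Fin n) :
    monomial (hcDiag i) (1 : R) = X (.inl i) * X (.inr i) := by
  rw [X, X, monomial_mul, one_mul, hcDiag]

theorem mk_monomial_eq_mk_monomial_hcNormalForm (i₀ : Fin n) (d : Fin n ⊕ Fin n →₀ ℕ) :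
    Ideal.Quotient.mk (hcIdeal n R) (monomial d 1) =
      Ideal.Quotient.mk (hcIdeal n R) (monomial (hcNormalForm i₀ (hcWeight n d)) 1) := by
  set π := Ideal.Quotient.mk (hcIdeal n R)
  set m : Fin n → ℕ := fun i => min (d (.inl i)) (d (.inr i))
  have hadd (a b : Fin n ⊕ Fin n →₀ ℕ) :
      monomial (a + b) (1 : R) = monomial a 1 * monomial b 1 := by
    rw [monomial_mul, one_mul]
  have hsmul (e : ℕ) (a : Fin n ⊕ Fin n →₀ ℕ) : monomial (e • a) (1 : R) = monomial a 1 ^ e := by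
    rw [monomial_pow, one_pow]
  have hdiag (i : Fin n) : π (monomial (hcDiag i) 1) = π (monomial (hcDiag i₀) 1) := by
    rw [monomial_hcDiag, monomial_hcDiag, Ideal.Quotient.eq]
    exact X_mul_X_sub_X_mul_X_mem_hcIdeal i i₀
  have hslack : (hcSlack (hcWeight n d)).toNat = ∑ i, m i := by
    rw [hcSlack_hcWeight]
    exact_mod_cast Int.toNat_natCast _
  have hpairs : π (monomial (∑ i, m i • hcDiag i) 1) = π (monomial ((∑ i, m i) • hcDiag i₀) 1) :=
    calc π (monomial (∑ i, m i • hcDiag i) 1) = ∏ i, π (monomial (hcDiag i) 1) ^ m i := by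
          simp only [monomial_sum_one, hsmul, map_prod, map_pow]
      _ = ∏ i, π (monomial (hcDiag i₀) 1) ^ m i := by simp only [hdiag]
      _ = π (monomial ((∑ i, m i) • hcDiag i₀) 1) := by
          rw [Finset.prod_pow_eq_pow_sum, hsmul, map_pow]
  conv_lhs => rw [← hcReduced_hcWeight_add_sum d]
  rw [hcNormalForm, hslack, hadd, hadd, map_mul, map_mul, hpairs]

theorem sub_mem_hcIdeal_of_hcWeight_eq (i₀ : Fin n) {a b : Fin n ⊕ Fin n →₀ ℕ}
    (h : hcWeight n a = hcWeight n b) : monomial a (1 : R) - monomial b 1 ∈ hcIdeal n R := by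
  rw [← Ideal.Quotient.eq, mk_monomial_eq_mk_monomial_hcNormalForm i₀ a,
    mk_monomial_eq_mk_monomial_hcNormalForm i₀ b, h]

end Ideal

theorem hcIdeal_le_ker {k : Type} [Field k] : hcIdeal n k ≤ RingHom.ker (hcHom n k) := by
  refine Ideal.span_le.mpr ?_
  rintro _ ⟨i, j, -, rfl⟩
  rw [SetLike.mem_coe, RingHom.mem_ker, map_sub, ← monomial_hcDiag, ← monomial_hcDiag,
    hcHom_monomial, hcHom_monomial, hcWeight_hcDiag, hcWeight_hcDiag, sub_self]

end Hypercube

theorem hypercube_semigroup_algebra_presentation (n : ℕ) (hn : 1 ≤ n)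
    (k : Type) [Field k] :
    (∀ f : AddMonoidAlgebra k (Fin (n + 1) → ℤ),
      f ∈ Set.range (hcHom n k) ↔
        ∀ w ∈ Finsupp.support f.coeff,
          (fun i => (w i : ℝ)) ∈ dualCone (coneGen (hcVerts n))) ∧
    RingHom.ker (hcHom n k).toRingHom = Ideal.span
      {p : MvPolynomial (Fin n ⊕ Fin n) k | ∃ i j : Fin n, i < j ∧
        p = MvPolynomial.X (Sum.inl i) * MvPolynomial.X (Sum.inr i)
          - MvPolynomial.X (Sum.inl j) * MvPolynomial.X (Sum.inr j)} := by
  let i₀ : Fin n := ⟨0, hn⟩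
  refine ⟨fun f => ?_, le_antisymm ?_ hcIdeal_le_ker⟩
  · rw [mem_range_iff_of_map_monomial hcHom_monomial]
    refine forall₂_congr fun w _ => ?_
    rw [mem_range_hcWeight_iff i₀, hcSlack_nonneg_iff, dualCone_coneGen, mem_dualCone_hcVerts_iff]
    exact forall_congr' fun A => by norm_cast
  · exact ker_le_of_map_monomial hcHom_monomial fun a b => sub_mem_hcIdeal_of_hcWeight_eq i₀
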